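/- arXiv:1910.04110 — 3 statements merged into one kernel-verified Lean document; each statement's English description precedes it below -/
import Mathlib

section
/- The Drinfeld map D : H* → H defined by D(φ) = (φ ⊗ id)((g ⊗ 1)·RR') = Σ_{i,j} φ(g a_i b_j)·b_i a_j is a linear isomorphism which maps SLF(H) onto Z(H) and satisfies D(φψ) = D(φ)D(ψ) for all φ, ψ ∈ SLF(H); hence D restricts to an isomorphism of algebras SLF(H) ≅ Z(H), and in particular SLF(H) is a commutative algebra. -/
/- STATEMENT 0: the Drinfeld map `D(φ) = Σ_{i,j} φ(g aᵢ bⱼ) • bᵢ aⱼ` is a linear isomorphism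
mapping `SLF(H)` onto `Z(H)`, multiplicative on `SLF(H)`; hence `SLF(H)` is commutative. -/

noncomputable section

open scoped TensorProduct
open TensorProduct

/-- Symmetric linear forms on `H`. -/
def IsSLF {H : Type} [Ring H] [Algebra ℂ H] (φ : Module.Dual ℂ H) : Prop :=
  ∀ x y : H, φ (x * y) = φ (y * x)

/-- The convolution product on the dual of a Hopf algebra:
`(φψ)(x) = φ(x')ψ(x'')`. -/
def conv {H : Type} [Ring H] [HopfAlgebra ℂ H] (φ ψ : Module.Dual ℂ H) :
    Module.Dual ℂ H :=
  LinearMap.mul' ℂ ℂ ∘ₗ TensorProduct.map φ ψ ∘ₗ (Coalgebra.comul (R := ℂ) (A := H))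

/-- The Drinfeld map `D(φ) = (φ ⊗ id)((g ⊗ 1)·RR') = Σ_{i,j} φ(g aᵢ bⱼ) • bᵢ aⱼ`. -/
def drinfeldMap {H ι : Type} [Ring H] [Algebra ℂ H] [Fintype ι]
    (aR bR : ι → H) (g : H) (φ : Module.Dual ℂ H) : H :=
  ∑ i, ∑ j, φ (g * (aR i * bR j)) • (bR i * aR j)

/-!
Write `D(φ) = Φ(φ(g ·))`, where `Φ(β) = (id ⊗ β)(R₂₁R)` is the factorization map; as `g` is
invertible, `D` is bijective. Since `S²` is conjugation by `g`, `φ` is symmetric iff `μ = φ(g ·)`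
is a q-character, `μ(xy) = μ(y S²(x))`, which is equivalent to invariance under the coadjoint
action `(h ⇀ μ)(w) = μ(h₁ w S(h₂))`. Because `R₂₁R` commutes with `Δ(H)`, `Φ` intertwines this
action with the adjoint one: `S(h₁) Φ(β) h₂ = Φ(h ⇀ β)`. An element `z` is central iff
`S(h₁) z h₂ = ε(h) z`, so `Φ(μ)` is central for invariant `μ`; conversely, if `Φ(μ)` is central
then `Φ(h ⇀ μ) = Φ(ε(h) μ)` and injectivity of `Φ` makes `μ` invariant.

As `g` is grouplike, `(φψ)(g ·)` is the convolution of `φ(g ·)` and `ψ(g ·)`, and expanding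
`(id ⊗ Δ)(R₂₁R) = R₂₁R₃₁R₁₃R₁₂` gives `Φ(μν) = Σ μ(aᵢbₗ) bᵢ Φ(ν) aₗ`, which is `Φ(μ)Φ(ν)` once
`Φ(ν)` is central. Commutativity of `SLF(H)` is inherited from `Z(H)` through the injective `D`.
-/

open Coalgebra HopfAlgebra

namespace HopfAlgebra

variable {R H : Type*} [CommSemiring R] [Semiring H] [HopfAlgebra R H] {ι : Type*}

lemma sum_counit_smul_left {a : H} (r : Repr R a ι) :
    ∑ i ∈ r.index, counit (R := R) (r.right i) • r.left i = a := by
  simpa only [map_sum, TensorProduct.rid_tmul, one_smul]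
    using congr(TensorProduct.rid R H $(sum_tmul_counit_eq (R := R) r))

lemma sum_sum_mul_mul_coassoc {T : Type*} [Semiring T] [Algebra R T] (A B C : H →ₗ[R] T)
    {a : H} (r : Repr R a ι) :
    ∑ i ∈ r.index, ∑ j ∈ (ℛ R (r.left i)).index,
      A ((ℛ R (r.left i)).left j) * B ((ℛ R (r.left i)).right j) * C (r.right i)
    = ∑ i ∈ r.index, ∑ j ∈ (ℛ R (r.right i)).index,
      A (r.left i) * B ((ℛ R (r.right i)).left j) * C ((ℛ R (r.right i)).right j) := by
  simpa only [map_sum, TensorProduct.map_tmul, LinearMap.comp_apply, LinearMap.mul'_apply,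
    mul_assoc] using congr((LinearMap.mul' R T ∘ₗ
      TensorProduct.map A (LinearMap.mul' R T ∘ₗ TensorProduct.map B C))
        $(sum_tmul_tmul_eq r (fun i ↦ ℛ R (r.left i)) (fun i ↦ ℛ R (r.right i))))

lemma sum_antipode_tmul_one_mul_comul {a : H} (r : Repr R a ι) :
    ∑ i ∈ r.index, (antipode R (r.left i) ⊗ₜ[R] (1 : H)) * comul (r.right i) = 1 ⊗ₜ a := by
  have h := sum_sum_mul_mul_coassoc ((TensorProduct.mk R H H).flip 1 ∘ₗ antipode R)
    ((TensorProduct.mk R H H).flip 1) (TensorProduct.mk R H H 1) r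
  simp only [LinearMap.comp_apply, LinearMap.flip_apply, TensorProduct.mk_apply,
    Algebra.TensorProduct.tmul_mul_tmul, mul_one, one_mul] at h
  calc _ = ∑ i ∈ r.index, ∑ j ∈ (ℛ R (r.right i)).index,
        (antipode R (r.left i) * (ℛ R (r.right i)).left j) ⊗ₜ (ℛ R (r.right i)).right j := by
        simp_rw [← (ℛ R _).eq, Finset.mul_sum, Algebra.TensorProduct.tmul_mul_tmul, one_mul]
    _ = 1 ⊗ₜ a := by
        rw [← h]
        simp_rw [← TensorProduct.sum_tmul, sum_antipode_mul_eq_smul, TensorProduct.smul_tmul,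
          ← TensorProduct.tmul_sum, sum_counit_smul]

lemma sum_comul_mul_one_tmul_antipode {a : H} (r : Repr R a ι) :
    ∑ i ∈ r.index, comul (r.left i) * ((1 : H) ⊗ₜ[R] antipode R (r.right i)) = a ⊗ₜ 1 := by
  have h := sum_sum_mul_mul_coassoc ((TensorProduct.mk R H H).flip 1)
    (TensorProduct.mk R H H 1) (TensorProduct.mk R H H 1 ∘ₗ antipode R) r
  simp only [LinearMap.comp_apply, LinearMap.flip_apply, TensorProduct.mk_apply,
    Algebra.TensorProduct.tmul_mul_tmul, mul_one, one_mul] at h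
  calc _ = ∑ i ∈ r.index, ∑ j ∈ (ℛ R (r.left i)).index,
        (ℛ R (r.left i)).left j ⊗ₜ ((ℛ R (r.left i)).right j * antipode R (r.right i)) := by
        simp_rw [← (ℛ R _).eq, Finset.sum_mul, Algebra.TensorProduct.tmul_mul_tmul, mul_one]
    _ = a ⊗ₜ 1 := by
        rw [h]
        simp_rw [← TensorProduct.tmul_sum, sum_mul_antipode_eq_smul, TensorProduct.tmul_smul,
          TensorProduct.smul_tmul', ← TensorProduct.sum_tmul, sum_counit_smul_left]

/- Expand `1 ⊗ h₁ = Σ (S h₁₁ ⊗ 1) Δ(h₁₂)`, move `Δ(h₁₂)` past `N`, reassociate, and contract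
`Σ Δ(h₂₁) (1 ⊗ S h₂₂) = h₂ ⊗ 1`. -/
lemma sum_one_tmul_mul_mul_one_tmul_antipode {N : H ⊗[R] H} (hN : ∀ x, Commute N (comul x))
    {a : H} (r : Repr R a ι) :
    ∑ i ∈ r.index, ((1 : H) ⊗ₜ[R] r.left i) * N * (1 ⊗ₜ antipode R (r.right i))
      = ∑ i ∈ r.index, (antipode R (r.left i) ⊗ₜ[R] (1 : H)) * N * (r.right i ⊗ₜ 1) := by
  have h := sum_sum_mul_mul_coassoc ((TensorProduct.mk R H H).flip 1 ∘ₗ antipode R)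
    (LinearMap.mulLeft R N ∘ₗ comul) (TensorProduct.mk R H H 1 ∘ₗ antipode R) r
  simp only [LinearMap.comp_apply, LinearMap.flip_apply, TensorProduct.mk_apply,
    LinearMap.mulLeft_apply] at h
  calc _ = ∑ i ∈ r.index, (∑ j ∈ (ℛ R (r.left i)).index,
          (antipode R ((ℛ R (r.left i)).left j) ⊗ₜ[R] (1 : H)) * comul ((ℛ R (r.left i)).right j))
          * N * (1 ⊗ₜ antipode R (r.right i)) := by
        simp_rw [sum_antipode_tmul_one_mul_comul]
    _ = ∑ i ∈ r.index, ∑ j ∈ (ℛ R (r.right i)).index,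
          (antipode R (r.left i) ⊗ₜ[R] (1 : H)) * (N * comul ((ℛ R (r.right i)).left j)) *
            (1 ⊗ₜ antipode R ((ℛ R (r.right i)).right j)) := by
        rw [← h]
        simp only [Finset.sum_mul, mul_assoc, (hN _).left_comm]
    _ = _ := by
        simp_rw [← sum_comul_mul_one_tmul_antipode (ℛ R (r.right _)), Finset.mul_sum, mul_assoc]

lemma sum_antipode_mul_mul_of_commute {z : H} (hz : ∀ x, Commute z x) {a : H} (r : Repr R a ι) :
    ∑ i ∈ r.index, antipode R (r.left i) * z * r.right i = counit (R := R) a • z := by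
  simp_rw [mul_assoc, (hz _).eq, ← mul_assoc, ← Finset.sum_mul, sum_antipode_mul_eq_smul,
    smul_mul_assoc, one_mul]

-- Both `z x` and `x z` equal `Σ x₁ S(x₂) z x₃`.
lemma commute_of_sum_antipode_mul_mul {z : H}
    (hz : ∀ a : H, ∑ i ∈ (ℛ R a).index, antipode R ((ℛ R a).left i) * z * (ℛ R a).right i
      = counit (R := R) a • z) (x : H) :
    Commute z x := by
  have h := sum_sum_mul_mul_coassoc LinearMap.id (LinearMap.mulRight R z ∘ₗ antipode R)
    LinearMap.id (ℛ R x)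
  simp only [LinearMap.id_coe, id_eq, LinearMap.comp_apply, LinearMap.mulRight_apply] at h
  calc z * x = ∑ i ∈ (ℛ R x).index, (∑ j ∈ (ℛ R ((ℛ R x).left i)).index,
          (ℛ R ((ℛ R x).left i)).left j * antipode R ((ℛ R ((ℛ R x).left i)).right j)) *
            z * (ℛ R x).right i := by
        simp_rw [sum_mul_antipode_eq_smul, smul_mul_assoc, one_mul, ← mul_smul_comm,
          ← Finset.mul_sum, sum_counit_smul]
    _ = ∑ i ∈ (ℛ R x).index, (ℛ R x).left i * ∑ j ∈ (ℛ R ((ℛ R x).right i)).index,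
          antipode R ((ℛ R ((ℛ R x).right i)).left j) * z * (ℛ R ((ℛ R x).right i)).right j := by
        simpa only [Finset.sum_mul, Finset.mul_sum, mul_assoc] using h
    _ = x * z := by
        simp_rw [hz, mul_smul_comm, ← smul_mul_assoc, ← Finset.sum_mul, sum_counit_smul_left]

def coadjoint (h : H) (β : Module.Dual R H) : Module.Dual R H :=
  ∑ i ∈ (ℛ R h).index,
    β ∘ₗ LinearMap.mulLeft R ((ℛ R h).left i) ∘ₗ
      LinearMap.mulRight R (antipode R ((ℛ R h).right i))

lemma coadjoint_apply (h : H) (β : Module.Dual R H) (w : H) :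
    coadjoint h β w
      = ∑ i ∈ (ℛ R h).index, β ((ℛ R h).left i * w * antipode R ((ℛ R h).right i)) := by
  simp [coadjoint, mul_assoc]

def IsQCharacter (μ : Module.Dual R H) : Prop :=
  ∀ x y : H, μ (x * y) = μ (y * antipode R (antipode R x))

lemma IsQCharacter.coadjoint_eq {μ : Module.Dual R H} (hμ : IsQCharacter μ) (h : H) :
    coadjoint h μ = counit (R := R) h • μ := by
  ext w
  have hterm : ∀ x y : H, μ (x * w * antipode R y) = μ (w * antipode R (antipode R x * y)) := by
    intro x y
    rw [mul_assoc, hμ, antipode_mul_antidistrib, mul_assoc]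
  calc coadjoint h μ w
      = μ (w * antipode R
          (∑ i ∈ (ℛ R h).index, antipode R ((ℛ R h).left i) * (ℛ R h).right i)) := by
        simp only [coadjoint_apply, hterm, map_sum, Finset.mul_sum]
    _ = (counit (R := R) h • μ) w := by
        rw [sum_antipode_mul_eq_smul, map_smul, antipode_one, mul_smul_comm, mul_one, map_smul,
          LinearMap.smul_apply]

lemma isQCharacter_of_coadjoint_eq {μ : Module.Dual R H}
    (hμ : ∀ h, coadjoint h μ = counit (R := R) h • μ) : IsQCharacter μ := by
  intro a b
  -- Coassociativity in `Module.End R H`, where `x ⊗ y ⊗ w` acts by `b ↦ x (b S²(w) S(y))`.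
  have h := sum_sum_mul_mul_coassoc (LinearMap.mul R H) ((LinearMap.mul R H).flip ∘ₗ antipode R)
    ((LinearMap.mul R H).flip ∘ₗ antipode R ∘ₗ antipode R) (ℛ R a)
  have hb := congr(μ ($h b))
  simp only [LinearMap.sum_apply, map_sum, Module.End.mul_apply, LinearMap.comp_apply,
    LinearMap.flip_apply, LinearMap.mul_apply'] at hb
  have hcollapse : ∀ c d : H, ∑ j ∈ (ℛ R d).index,
      μ (c * (b * antipode R (antipode R ((ℛ R d).right j)) * antipode R ((ℛ R d).left j)))
        = counit (R := R) d • μ (c * b) := by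
    intro c d
    simp only [mul_assoc b, ← antipode_mul_antidistrib, ← map_sum, ← Finset.mul_sum,
      sum_mul_antipode_eq_smul, antipode_one, map_smul, mul_smul_comm, mul_one]
  calc μ (a * b)
      = ∑ i ∈ (ℛ R a).index, counit (R := R) ((ℛ R a).right i) • μ ((ℛ R a).left i * b) := by
        simp only [← map_smul, ← smul_mul_assoc, ← map_sum, ← Finset.sum_mul, sum_counit_smul_left]
    _ = ∑ i ∈ (ℛ R a).index, ∑ j ∈ (ℛ R ((ℛ R a).left i)).index,
          μ ((ℛ R ((ℛ R a).left i)).left j * (b * antipode R (antipode R ((ℛ R a).right i)) *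
            antipode R ((ℛ R ((ℛ R a).left i)).right j))) := by
        rw [hb]
        simp only [hcollapse]
    _ = ∑ i ∈ (ℛ R a).index,
          coadjoint ((ℛ R a).left i) μ (b * antipode R (antipode R ((ℛ R a).right i))) := by
        simp only [coadjoint_apply, mul_assoc]
    _ = μ (b * antipode R (antipode R a)) := by
        simp only [hμ, LinearMap.smul_apply, ← map_smul, ← mul_smul_comm, ← map_sum,
          ← Finset.mul_sum, sum_counit_smul]

def sliceRight : H ⊗[R] H →ₗ[R] Module.Dual R H →ₗ[R] H :=
  (LinearMap.lTensorHom H).flip.compr₂ (TensorProduct.rid R H).toLinearMap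

@[simp]
lemma sliceRight_tmul (x y : H) (β : Module.Dual R H) : sliceRight (x ⊗ₜ y) β = β y • x := by
  simp [sliceRight]

lemma mul_sliceRight_mul (x y : H) (n : H ⊗[R] H) (β : Module.Dual R H) :
    x * sliceRight n β * y = sliceRight ((x ⊗ₜ 1) * n * (y ⊗ₜ 1)) β := by
  induction n using TensorProduct.induction_on with
  | zero => simp [sliceRight]
  | tmul p q => simp [Algebra.TensorProduct.tmul_mul_tmul, mul_assoc]
  | add p q hp hq => simp only [map_add, LinearMap.add_apply, mul_add, add_mul, hp, hq]

lemma sliceRight_comp_mulLeft_comp_mulRight (x y : H) (n : H ⊗[R] H) (β : Module.Dual R H) :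
    sliceRight n (β ∘ₗ LinearMap.mulLeft R x ∘ₗ LinearMap.mulRight R y)
      = sliceRight ((1 ⊗ₜ x) * n * (1 ⊗ₜ y)) β := by
  induction n using TensorProduct.induction_on with
  | zero => simp [sliceRight]
  | tmul p q => simp [Algebra.TensorProduct.tmul_mul_tmul, mul_assoc]
  | add p q hp hq => simp only [map_add, LinearMap.add_apply, mul_add, add_mul, hp, hq]

lemma sum_antipode_mul_sliceRight_mul {N : H ⊗[R] H} (hN : ∀ x, Commute N (comul x))
    (h : H) (β : Module.Dual R H) :
    ∑ i ∈ (ℛ R h).index, antipode R ((ℛ R h).left i) * sliceRight N β * (ℛ R h).right i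
      = sliceRight N (coadjoint h β) := by
  calc _ = sliceRight (∑ i ∈ (ℛ R h).index,
          (antipode R ((ℛ R h).left i) ⊗ₜ[R] (1 : H)) * N * ((ℛ R h).right i ⊗ₜ 1)) β := by
        simp only [mul_sliceRight_mul, map_sum, LinearMap.sum_apply]
    _ = sliceRight (∑ i ∈ (ℛ R h).index,
          ((1 : H) ⊗ₜ[R] (ℛ R h).left i) * N * (1 ⊗ₜ antipode R ((ℛ R h).right i))) β := by
        rw [sum_one_tmul_mul_mul_one_tmul_antipode hN]
    _ = _ := by
        simp only [coadjoint, map_sum, LinearMap.sum_apply,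
          sliceRight_comp_mulLeft_comp_mulRight]

lemma commute_comm_mul_comul {Rm : H ⊗[R] H}
    (hR : ∀ x, Rm * comul x = TensorProduct.comm R H H (comul x) * Rm) (x : H) :
    Commute (TensorProduct.comm R H H Rm * Rm) (comul x) := by
  have hcomm : ∀ u v : H ⊗[R] H, TensorProduct.comm R H H (u * v)
      = TensorProduct.comm R H H u * TensorProduct.comm R H H v :=
    map_mul (Algebra.TensorProduct.comm R H H)
  have hR' : TensorProduct.comm R H H Rm * TensorProduct.comm R H H (comul x)
      = comul x * TensorProduct.comm R H H Rm := by
    simpa only [hcomm, TensorProduct.comm_comm] using congr(TensorProduct.comm R H H $(hR x))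
  rw [Commute, SemiconjBy, mul_assoc, hR x, ← mul_assoc, hR', mul_assoc]

lemma antipode_antipode_eq_mul_mul_inv (u : Hˣ)
    (hu : ∀ x : H, antipode R (antipode R x) * u = u * x) (x : H) :
    antipode R (antipode R x) = u * x * ↑u⁻¹ := by
  rw [← hu, Units.mul_inv_cancel_right]

lemma bijective_comp_mulLeft (u : Hˣ) :
    Function.Bijective fun φ : Module.Dual R H ↦ φ ∘ₗ LinearMap.mulLeft R (u : H) :=
  Function.bijective_iff_has_inverse.2
    ⟨fun ψ ↦ ψ ∘ₗ LinearMap.mulLeft R ↑u⁻¹, fun φ ↦ by ext; simp, fun ψ ↦ by ext; simp⟩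

section RMatrix

variable {ι : Type*} [Fintype ι] (aR bR : ι → H)

/- `(id ⊗ β)(R₂₁R)` is the paper's `(β ⊗ id)(RR')`; `R₂₁R` is used because it commutes with
`Δ(H)` rather than with `Δᵒᵖ(H)`. -/
variable (R) in
def factorizationMap : Module.Dual R H →ₗ[R] H :=
  sliceRight (TensorProduct.comm R H H (∑ i, aR i ⊗ₜ bR i) * ∑ i, aR i ⊗ₜ bR i)

lemma factorizationMap_apply (β : Module.Dual R H) :
    factorizationMap R aR bR β = ∑ i, ∑ j, β (aR i * bR j) • (bR i * aR j) := by
  simp [factorizationMap, map_sum, Finset.sum_mul_sum, Algebra.TensorProduct.tmul_mul_tmul]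

variable {aR bR}

lemma lTensor_comul_comm_mul_self
    (hR₁ : ∑ i, comul (aR i) ⊗ₜ[R] bR i = ∑ i, ∑ j, (aR i ⊗ₜ[R] aR j) ⊗ₜ[R] (bR i * bR j))
    (hR₂ : ∑ i, aR i ⊗ₜ[R] comul (bR i) = ∑ i, ∑ j, (aR i * aR j) ⊗ₜ[R] (bR j ⊗ₜ[R] bR i)) :
    (comul (R := R) (A := H)).lTensor H
        (TensorProduct.comm R H H (∑ i, aR i ⊗ₜ bR i) * ∑ i, aR i ⊗ₜ bR i)
      = ∑ i, ∑ k, ∑ j, ∑ l,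
          (bR i * bR k * (aR j * aR l)) ⊗ₜ ((aR i * bR l) ⊗ₜ[R] (aR k * bR j)) := by
  have hR₁' :
      ∑ i, bR i ⊗ₜ[R] comul (aR i) = ∑ i, ∑ k, (bR i * bR k) ⊗ₜ[R] (aR i ⊗ₜ[R] aR k) := by
    simpa [map_sum] using congr(TensorProduct.comm R (H ⊗[R] H) H $hR₁)
  calc _ = (∑ i, bR i ⊗ₜ[R] comul (aR i)) * ∑ j, aR j ⊗ₜ[R] comul (bR j) := by
        simp [map_sum, Finset.sum_mul_sum, Algebra.TensorProduct.tmul_mul_tmul,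
          Bialgebra.comul_mul]
    _ = _ := by
        rw [hR₁', hR₂]
        simp_rw [Finset.sum_mul]
        simp_rw [Finset.mul_sum, Algebra.TensorProduct.tmul_mul_tmul]

variable (hRΔ : ∀ x : H, (∑ i, aR i ⊗ₜ[R] bR i) * comul x
  = TensorProduct.comm R H H (comul x) * ∑ i, aR i ⊗ₜ[R] bR i)
include hRΔ

lemma sum_antipode_mul_factorizationMap_mul (h : H) (β : Module.Dual R H) :
    ∑ i ∈ (ℛ R h).index,
        antipode R ((ℛ R h).left i) * factorizationMap R aR bR β * (ℛ R h).right i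
      = factorizationMap R aR bR (coadjoint h β) :=
  sum_antipode_mul_sliceRight_mul (commute_comm_mul_comul hRΔ) h β

lemma IsQCharacter.commute_factorizationMap {μ : Module.Dual R H} (hμ : IsQCharacter μ)
    (x : H) : Commute (factorizationMap R aR bR μ) x :=
  commute_of_sum_antipode_mul_mul (fun h ↦ by
    rw [sum_antipode_mul_factorizationMap_mul hRΔ, hμ.coadjoint_eq, map_smul]) x

lemma isQCharacter_of_commute_factorizationMap {μ : Module.Dual R H}
    (hinj : Function.Injective (factorizationMap R aR bR))
    (hμ : ∀ x, Commute (factorizationMap R aR bR μ) x) : IsQCharacter μ :=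
  isQCharacter_of_coadjoint_eq fun h ↦ hinj <| by
    rw [← sum_antipode_mul_factorizationMap_mul hRΔ, sum_antipode_mul_mul_of_commute hμ, map_smul]

end RMatrix

end HopfAlgebra

section Complex

variable {H : Type} [Ring H] [HopfAlgebra ℂ H]

lemma conv_comp_mulLeft {g : H} (hg : comul (R := ℂ) g = g ⊗ₜ g) (φ ψ : Module.Dual ℂ H) :
    conv φ ψ ∘ₗ LinearMap.mulLeft ℂ g
      = conv (φ ∘ₗ LinearMap.mulLeft ℂ g) (ψ ∘ₗ LinearMap.mulLeft ℂ g) := by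
  ext x
  simp only [conv, LinearMap.comp_apply, LinearMap.mulLeft_apply, Bialgebra.comul_mul, hg]
  induction comul (R := ℂ) x using TensorProduct.induction_on with
  | zero => simp
  | tmul p q => simp [Algebra.TensorProduct.tmul_mul_tmul]
  | add p q hp hq => simp only [mul_add, map_add, hp, hq]

lemma isSLF_iff_isQCharacter_comp_mulLeft (u : Hˣ)
    (hu : ∀ x : H, antipode ℂ (antipode ℂ x) * u = u * x) (φ : Module.Dual ℂ H) :
    IsSLF φ ↔ IsQCharacter (φ ∘ₗ LinearMap.mulLeft ℂ (u : H)) := by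
  simp only [IsQCharacter, LinearMap.comp_apply, LinearMap.mulLeft_apply,
    antipode_antipode_eq_mul_mul_inv u hu]
  refine ⟨fun hφ x y ↦ ?_, fun hμ x y ↦ ?_⟩
  · calc φ (u * (x * y)) = φ (u * x * ↑u⁻¹ * (u * y)) := by simp [mul_assoc]
      _ = φ (u * y * (u * x * ↑u⁻¹)) := hφ _ _
      _ = _ := by simp [mul_assoc]
  · calc φ (x * y) = φ (u * (↑u⁻¹ * x * y)) := by simp [mul_assoc]
      _ = φ (u * (y * x * ↑u⁻¹)) := by rw [hμ]; simp [mul_assoc]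
      _ = φ (u * (↑u⁻¹ * (y * x))) := by rw [hμ ↑u⁻¹ (y * x)]; simp [mul_assoc]
      _ = φ (y * x) := by simp

variable {ι : Type} [Fintype ι] {aR bR : ι → H}

lemma drinfeldMap_eq_factorizationMap (g : H) (φ : Module.Dual ℂ H) :
    drinfeldMap aR bR g φ = factorizationMap ℂ aR bR (φ ∘ₗ LinearMap.mulLeft ℂ g) := by
  rw [factorizationMap_apply]
  rfl

lemma factorizationMap_conv_of_commute
    (hR₁ : ∑ i, comul (aR i) ⊗ₜ[ℂ] bR i = ∑ i, ∑ j, (aR i ⊗ₜ[ℂ] aR j) ⊗ₜ[ℂ] (bR i * bR j))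
    (hR₂ : ∑ i, aR i ⊗ₜ[ℂ] comul (bR i) = ∑ i, ∑ j, (aR i * aR j) ⊗ₜ[ℂ] (bR j ⊗ₜ[ℂ] bR i))
    (μ : Module.Dual ℂ H) {ν : Module.Dual ℂ H}
    (hν : ∀ x, Commute (factorizationMap ℂ aR bR ν) x) :
    factorizationMap ℂ aR bR (conv μ ν)
      = factorizationMap ℂ aR bR μ * factorizationMap ℂ aR bR ν := by
  have := congr(((TensorProduct.rid ℂ H).toLinearMap ∘ₗ
    (LinearMap.mul' ℂ ℂ ∘ₗ TensorProduct.map μ ν).lTensor H)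
      $(lTensor_comul_comm_mul_self hR₁ hR₂))
  calc factorizationMap ℂ aR bR (conv μ ν)
      = ∑ i, ∑ k, ∑ j, ∑ l,
          (μ (aR i * bR l) * ν (aR k * bR j)) • (bR i * bR k * (aR j * aR l)) := by
        simpa [factorizationMap, sliceRight, conv, LinearMap.lTensor_comp, map_sum] using this
    _ = ∑ i, ∑ l, ∑ k, ∑ j,
          (μ (aR i * bR l) * ν (aR k * bR j)) • (bR i * bR k * (aR j * aR l)) :=
        Finset.sum_congr rfl fun i _ ↦
          (Finset.sum_comm.trans (Finset.sum_congr rfl fun _ _ ↦ Finset.sum_comm)).symm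
    _ = ∑ i, ∑ l, μ (aR i * bR l) • (bR i * factorizationMap ℂ aR bR ν * aR l) := by
        simp only [factorizationMap_apply aR bR ν, Finset.mul_sum, Finset.sum_mul, Finset.smul_sum,
          mul_smul_comm, smul_mul_assoc, mul_smul, mul_assoc]
    _ = factorizationMap ℂ aR bR μ * factorizationMap ℂ aR bR ν := by
        simp only [factorizationMap_apply aR bR μ, Finset.sum_mul, smul_mul_assoc, mul_assoc,
          (hν _).eq]

end Complex

theorem drinfeldMap_iso_SLF_to_center_general
    {H : Type} [Ring H] [HopfAlgebra ℂ H]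
    -- an invertible R-matrix `R = Σᵢ aᵢ ⊗ bᵢ`
    {ι : Type} [Fintype ι] (aR bR : ι → H)
    -- `R Δ(x) = Δᵒᵖ(x) R`
    (hRΔ : ∀ x : H,
      (∑ i, aR i ⊗ₜ[ℂ] bR i) * Coalgebra.comul (R := ℂ) x
        = (TensorProduct.comm ℂ H H) (Coalgebra.comul (R := ℂ) x)
            * ∑ i, aR i ⊗ₜ[ℂ] bR i)
    -- `(Δ ⊗ id)(R) = R₁₃ R₂₃`
    (hR₁ : (∑ i, (Coalgebra.comul (R := ℂ) (aR i)) ⊗ₜ[ℂ] bR i)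
        = ∑ i, ∑ j, (aR i ⊗ₜ[ℂ] aR j) ⊗ₜ[ℂ] (bR i * bR j))
    -- `(id ⊗ Δ)(R) = R₁₃ R₁₂`
    (hR₂ : (∑ i, aR i ⊗ₜ[ℂ] (Coalgebra.comul (R := ℂ) (bR i)))
        = ∑ i, ∑ j, (aR i * aR j) ⊗ₜ[ℂ] (bR j ⊗ₜ[ℂ] bR i))
    -- factorizability: `β ↦ (β ⊗ id)(RR')` is bijective
    (hfact : Function.Bijective fun β : Module.Dual ℂ H =>
        ∑ i, ∑ j, β (aR i * bR j) • (bR i * aR j))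
    -- the pivotal element `g = u v⁻¹` where `u = Σᵢ S(bᵢ) aᵢ` is the Drinfeld element;
    -- `g` is invertible, grouplike and implements `S²`
    (g gi : H)
    (hgi₁ : g * gi = 1) (hgi₂ : gi * g = 1)
    (hggrouplike : Coalgebra.comul (R := ℂ) g = g ⊗ₜ[ℂ] g)
    (hgS₂ : ∀ x : H,
      HopfAlgebra.antipode (R := ℂ) (HopfAlgebra.antipode (R := ℂ) x) * g = g * x) :
    -- `D` is a linear isomorphism
    Function.Bijective (drinfeldMap aR bR g)
    -- `D` maps `SLF(H)` into the center
    ∧ (∀ φ : Module.Dual ℂ H, IsSLF φ → ∀ x : H,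
        drinfeldMap aR bR g φ * x = x * drinfeldMap aR bR g φ)
    -- `D` maps `SLF(H)` onto the center
    ∧ (∀ z : H, (∀ x : H, z * x = x * z) →
        ∃ φ : Module.Dual ℂ H, IsSLF φ ∧ drinfeldMap aR bR g φ = z)
    -- `D` is multiplicative on `SLF(H)`
    ∧ (∀ φ ψ : Module.Dual ℂ H, IsSLF φ → IsSLF ψ →
        drinfeldMap aR bR g (conv φ ψ)
          = drinfeldMap aR bR g φ * drinfeldMap aR bR g ψ)
    -- in particular `SLF(H)` is a commutative algebra
    ∧ (∀ φ ψ : Module.Dual ℂ H, IsSLF φ → IsSLF ψ → conv φ ψ = conv ψ φ) := by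
  let u : Hˣ := ⟨g, gi, hgi₁, hgi₂⟩
  have hΦ : Function.Bijective (factorizationMap ℂ aR bR) := by
    simpa only [← factorizationMap_apply] using hfact
  have hD := drinfeldMap_eq_factorizationMap (aR := aR) (bR := bR) g
  have hDbij : Function.Bijective (drinfeldMap aR bR g) := by
    rw [show drinfeldMap aR bR g = _ from funext hD]
    exact hΦ.comp (bijective_comp_mulLeft u)
  have hSLF (φ : Module.Dual ℂ H) : IsSLF φ ↔ IsQCharacter (φ ∘ₗ LinearMap.mulLeft ℂ g) :=
    isSLF_iff_isQCharacter_comp_mulLeft u hgS₂ φ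
  have central (φ : Module.Dual ℂ H) (hφ : IsSLF φ) (x : H) :
      Commute (factorizationMap ℂ aR bR (φ ∘ₗ LinearMap.mulLeft ℂ g)) x :=
    ((hSLF φ).1 hφ).commute_factorizationMap hRΔ x
  have mult (φ ψ : Module.Dual ℂ H) (hψ : IsSLF ψ) :
      drinfeldMap aR bR g (conv φ ψ) = drinfeldMap aR bR g φ * drinfeldMap aR bR g ψ := by
    rw [hD, hD, hD, conv_comp_mulLeft hggrouplike]
    exact factorizationMap_conv_of_commute hR₁ hR₂ _ (central ψ hψ)
  refine ⟨hDbij, fun φ hφ ↦ hD φ ▸ central φ hφ, fun z hz ↦ ?_, fun φ ψ _ hψ ↦ mult φ ψ hψ,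
    fun φ ψ hφ hψ ↦ hDbij.1 ?_⟩
  · obtain ⟨φ, rfl⟩ := hDbij.2 z
    rw [hD] at hz
    exact ⟨φ, (hSLF φ).2 (isQCharacter_of_commute_factorizationMap hRΔ hΦ.1 hz), rfl⟩
  · rw [mult φ ψ hψ, mult ψ φ hφ, hD φ]
    exact central φ hφ _

theorem drinfeldMap_iso_SLF_to_center
    {H : Type} [Ring H] [HopfAlgebra ℂ H] [FiniteDimensional ℂ H]
    -- the antipode is invertible
    (Sinv : H →ₗ[ℂ] H)
    (hSinv₁ : ∀ x : H, Sinv (HopfAlgebra.antipode (R := ℂ) x) = x)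
    (hSinv₂ : ∀ x : H, HopfAlgebra.antipode (R := ℂ) (Sinv x) = x)
    -- an invertible R-matrix `R = Σᵢ aᵢ ⊗ bᵢ`
    {ι : Type} [Fintype ι] (aR bR : ι → H)
    (hRinv : IsUnit (∑ i, aR i ⊗ₜ[ℂ] bR i : H ⊗[ℂ] H))
    -- `R Δ(x) = Δᵒᵖ(x) R`
    (hRΔ : ∀ x : H,
      (∑ i, aR i ⊗ₜ[ℂ] bR i) * Coalgebra.comul (R := ℂ) x
        = (TensorProduct.comm ℂ H H) (Coalgebra.comul (R := ℂ) x)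
            * ∑ i, aR i ⊗ₜ[ℂ] bR i)
    -- `(Δ ⊗ id)(R) = R₁₃ R₂₃`
    (hR₁ : (∑ i, (Coalgebra.comul (R := ℂ) (aR i)) ⊗ₜ[ℂ] bR i)
        = ∑ i, ∑ j, (aR i ⊗ₜ[ℂ] aR j) ⊗ₜ[ℂ] (bR i * bR j))
    -- `(id ⊗ Δ)(R) = R₁₃ R₁₂`
    (hR₂ : (∑ i, aR i ⊗ₜ[ℂ] (Coalgebra.comul (R := ℂ) (bR i)))
        = ∑ i, ∑ j, (aR i * aR j) ⊗ₜ[ℂ] (bR j ⊗ₜ[ℂ] bR i))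
    -- a ribbon element `v`
    (v vinv : H) (hv₁ : v * vinv = 1) (hv₂ : vinv * v = 1)
    (hvcentral : ∀ x : H, v * x = x * v)
    (hSv : HopfAlgebra.antipode (R := ℂ) v = v)
    (hεv : Coalgebra.counit (R := ℂ) v = 1)
    -- `Δ(v) = (R'R)⁻¹ (v ⊗ v)`, i.e. `R' R Δ(v) = v ⊗ v`
    (hΔv : (∑ i, bR i ⊗ₜ[ℂ] aR i) * ((∑ i, aR i ⊗ₜ[ℂ] bR i)
            * Coalgebra.comul (R := ℂ) v) = v ⊗ₜ[ℂ] v)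
    -- factorizability: `β ↦ (β ⊗ id)(RR')` is bijective
    (hfact : Function.Bijective fun β : Module.Dual ℂ H =>
        ∑ i, ∑ j, β (aR i * bR j) • (bR i * aR j))
    -- the pivotal element `g = u v⁻¹` where `u = Σᵢ S(bᵢ) aᵢ` is the Drinfeld element;
    -- `g` is invertible, grouplike and implements `S²`
    (g gi : H)
    (hg : g = (∑ i, HopfAlgebra.antipode (R := ℂ) (bR i) * aR i) * vinv)
    (hgi₁ : g * gi = 1) (hgi₂ : gi * g = 1)
    (hggrouplike : Coalgebra.comul (R := ℂ) g = g ⊗ₜ[ℂ] g)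
    (hgS₂ : ∀ x : H,
      HopfAlgebra.antipode (R := ℂ) (HopfAlgebra.antipode (R := ℂ) x) * g = g * x) :
    -- `D` is a linear isomorphism
    Function.Bijective (drinfeldMap aR bR g)
    -- `D` maps `SLF(H)` into the center
    ∧ (∀ φ : Module.Dual ℂ H, IsSLF φ → ∀ x : H,
        drinfeldMap aR bR g φ * x = x * drinfeldMap aR bR g φ)
    -- `D` maps `SLF(H)` onto the center
    ∧ (∀ z : H, (∀ x : H, z * x = x * z) →
        ∃ φ : Module.Dual ℂ H, IsSLF φ ∧ drinfeldMap aR bR g φ = z)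
    -- `D` is multiplicative on `SLF(H)`
    ∧ (∀ φ ψ : Module.Dual ℂ H, IsSLF φ → IsSLF ψ →
        drinfeldMap aR bR g (conv φ ψ)
          = drinfeldMap aR bR g φ * drinfeldMap aR bR g ψ)
    -- in particular `SLF(H)` is a commutative algebra
    ∧ (∀ φ ψ : Module.Dual ℂ H, IsSLF φ → IsSLF ψ → conv φ ψ = conv ψ φ) :=
  drinfeldMap_iso_SLF_to_center_general aR bR hRΔ hR₁ hR₂ hfact g gi hgi₁ hgi₂ hggrouplike hgS₂

end
end

section
/- Define on H* the product φ ∗ ψ by (φ ∗ ψ)(x) = Σ_{i,j} φ(x'·b_j·S(b_i))·ψ(a_i·x''·a_j). Then the factorizability map Ψ : H* → H, Ψ(β) = (β ⊗ id)(RR'), satisfies Ψ(φ ∗ ψ) = Ψ(φ)·Ψ(ψ) and Ψ(ε) = 1, and it intertwines the actions: Ψ(φ(h'·?·S(h''))) = S(h')·Ψ(φ)·h'' for all h ∈ H and φ ∈ H*. Since Ψ is bijective, (H*, ∗, ε) is an associative unital algebra and Ψ is an algebra isomorphism onto H (this realizes the isomorphism of the loop algebra L_{0,1}(H) with H). -/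
/- STATEMENT 3: the loop-algebra product `∗` on `H*` and the isomorphism `Ψ : L_{0,1}(H) ≅ H`. -/

noncomputable section

open scoped TensorProduct
open TensorProduct

/-- The factorizability map `Ψ(β) = (β ⊗ id)(RR') = Σ_{i,j} β(aᵢ bⱼ) • bᵢ aⱼ`. -/
def PsiMap {H ι : Type} [Ring H] [Algebra ℂ H] [Fintype ι]
    (aR bR : ι → H) (β : Module.Dual ℂ H) : H :=
  ∑ i, ∑ j, β (aR i * bR j) • (bR i * aR j)

/-- The product of `L₀₁(H) ≅ F₀₁(H)`:
`(φ ∗ ψ)(x) = Σ_{i,j} φ(x' bⱼ S(bᵢ)) ψ(aᵢ x'' aⱼ)`. -/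
def starProd {H ι : Type} [Ring H] [HopfAlgebra ℂ H] [Fintype ι]
    (aR bR : ι → H) (φ ψ : Module.Dual ℂ H) : Module.Dual ℂ H :=
  ∑ i, ∑ j, conv
    (φ ∘ₗ LinearMap.mulRight ℂ (bR j * HopfAlgebra.antipode (R := ℂ) (bR i)))
    (ψ ∘ₗ LinearMap.mulLeft ℂ (aR i) ∘ₗ LinearMap.mulRight ℂ (aR j))

/-!
Write `R₂₁ = R'` and `M = R R₂₁`, so that `Ψ(β) = (β ⊗ id)(M)`. The star product is `(φ ⊗ ψ) ∘ Γ`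
for the twisted coproduct `Γ(x) = Σᵢ (1 ⊗ aᵢ) Δ(x) R₂₁ (S(bᵢ) ⊗ 1)`, so multiplicativity of `Ψ` is
the identity `(Γ ⊗ id)(M) = M₁₃ M₂₃` in `H ⊗ H ⊗ H`. By the hexagon axioms
`(Δ ⊗ id)(M) = R₁₃ M₂₃ R₃₁`. Since `M` commutes with `Δᵒᵖ(H)`, `M₂₃` commutes with
`R₃₁ R₂₁ = (id ⊗ Δᵒᵖ)(R₂₁)`, and what is left collapses by `Σᵢⱼ aᵢaⱼ ⊗ bⱼS(bᵢ) = 1`, a consequence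
of `(id ⊗ ε)(R) = 1`.

The same commutation `M Δᵒᵖ(h) = Δᵒᵖ(h) M` gives the intertwining property: in the convolution
algebra of linear maps `H → H ⊗ H`, `Δᵒᵖ` is the product of `x ↦ 1 ⊗ x` and `x ↦ x ⊗ 1`, whose
convolution inverses are their composites with `S`. Associativity and the unit of `∗` are pulled
back along the injective map `Ψ`.
-/

open TensorProduct WithConv Coalgebra

namespace LoopAlgebra

section Convolution

lemma mulRight_comp_convMul {K C A : Type*} [CommSemiring K] [AddCommMonoid C] [Module K C]
    [CoalgebraStruct K C] [Semiring A] [Algebra K A] (u : A) (f g : WithConv (C →ₗ[K] A)) :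
    toConv (LinearMap.mulRight K u ∘ₗ f.ofConv) * g =
      f * toConv (LinearMap.mulLeft K u ∘ₗ g.ofConv) := by
  ext c
  simp [(ℛ K c).convMul_apply, mul_assoc]

variable {K C A : Type*} [CommSemiring K] [Semiring C] [HopfAlgebra K C] [Semiring A] [Algebra K A]

lemma algHom_convMul_comp_antipode (f : C →ₐ[K] A) :
    toConv f.toLinearMap * toConv (f.toLinearMap ∘ₗ HopfAlgebra.antipode K) = 1 := by
  have h := LinearMap.algHom_comp_convMul_distrib f (toConv LinearMap.id)
    (toConv (HopfAlgebra.antipode K))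
  rw [LinearMap.id_mul_antipode] at h
  ext c
  simpa using (LinearMap.congr_fun h c).symm

lemma comp_antipode_convMul_algHom (f : C →ₐ[K] A) :
    toConv (f.toLinearMap ∘ₗ HopfAlgebra.antipode K) * toConv f.toLinearMap = 1 := by
  have h := LinearMap.algHom_comp_convMul_distrib f (toConv (HopfAlgebra.antipode K))
    (toConv LinearMap.id)
  rw [LinearMap.antipode_mul_id] at h
  ext c
  simpa using (LinearMap.congr_fun h c).symm

theorem convMul_mulRight_antipode_eq (f g : C →ₐ[K] A) (u : A)
    (hu : ∀ c, Commute u ((toConv g.toLinearMap * toConv f.toLinearMap) c)) :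
    toConv (LinearMap.mulRight K u ∘ₗ g.toLinearMap ∘ₗ HopfAlgebra.antipode K) *
        toConv g.toLinearMap
      = toConv (LinearMap.mulRight K u ∘ₗ f.toLinearMap) *
          toConv (f.toLinearMap ∘ₗ HopfAlgebra.antipode K) := by
  let F := toConv f.toLinearMap
  let G := toConv g.toLinearMap
  let σF := toConv (f.toLinearMap ∘ₗ HopfAlgebra.antipode K)
  let σG := toConv (g.toLinearMap ∘ₗ HopfAlgebra.antipode K)
  have hFσ : F * σF = 1 := algHom_convMul_comp_antipode f
  have hσG : σG * G = 1 := comp_antipode_convMul_algHom g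
  have hj : toConv (LinearMap.mulLeft K u ∘ₗ (G * F).ofConv) =
      toConv (LinearMap.mulRight K u ∘ₗ (G * F).ofConv) := by
    ext c; exact (hu c).eq
  calc toConv (LinearMap.mulRight K u ∘ₗ σG.ofConv) * G
      = toConv (LinearMap.mulRight K u ∘ₗ σG.ofConv) * (G * F) * σF := by
        rw [mul_assoc _ (G * F), mul_assoc G, hFσ, mul_one]
    _ = σG * toConv (LinearMap.mulRight K u ∘ₗ (G * F).ofConv) * σF := by
        rw [mulRight_comp_convMul, hj]
    _ = σG * G * F * toConv (LinearMap.mulLeft K u ∘ₗ σF.ofConv) := by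
        rw [mul_assoc, mulRight_comp_convMul, ← mul_assoc, ← mul_assoc]
    _ = toConv (LinearMap.mulRight K u ∘ₗ F.ofConv) * σF := by
        rw [hσG, one_mul, mulRight_comp_convMul]

end Convolution

section Slice

variable {K H V : Type*} [CommSemiring K] [Semiring H] [Algebra K H] [AddCommMonoid V] [Module K V]

def sliceLeft (β : V →ₗ[K] K) : V ⊗[K] H →ₗ[K] H :=
  TensorProduct.lid K H ∘ₗ β.rTensor H

@[simp] lemma sliceLeft_tmul (β : V →ₗ[K] K) (v : V) (x : H) :
    sliceLeft β (v ⊗ₜ x) = β v • x := by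
  simp [sliceLeft]

lemma sliceLeft_comp {W : Type*} [AddCommMonoid W] [Module K W] (β : V →ₗ[K] K)
    (f : W →ₗ[K] V) (u : W ⊗[K] H) :
    sliceLeft (β ∘ₗ f) u = sliceLeft β (f.rTensor H u) := by
  simp [sliceLeft, LinearMap.rTensor_comp]

lemma sliceLeft_sum {κ : Type*} (s : Finset κ) (β : κ → V →ₗ[K] K) (u : V ⊗[K] H) :
    sliceLeft (∑ k ∈ s, β k) u = ∑ k ∈ s, sliceLeft (β k) u := by
  induction u using TensorProduct.induction_on with
  | zero => simp
  | tmul v x => simp [Finset.sum_smul]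
  | add u v hu hv => simp [hu, hv, Finset.sum_add_distrib]

lemma mul_sliceLeft_mul {B : Type*} [Semiring B] [Algebra K B] (β : B →ₗ[K] K) (x y : H)
    (u : B ⊗[K] H) :
    x * sliceLeft β u * y = sliceLeft β ((1 ⊗ₜ x) * u * (1 ⊗ₜ y)) := by
  induction u using TensorProduct.induction_on with
  | zero => simp
  | tmul v z => simp [Algebra.TensorProduct.tmul_mul_tmul]
  | add u v hu hv => simp [mul_add, add_mul, hu, hv]

lemma sliceLeft_comp_mulLeft_mulRight (β : H →ₗ[K] K) (x y : H) (u : H ⊗[K] H) :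
    sliceLeft (β ∘ₗ LinearMap.mulLeft K x ∘ₗ LinearMap.mulRight K y) u =
      sliceLeft β ((x ⊗ₜ 1) * u * (y ⊗ₜ 1)) := by
  induction u using TensorProduct.induction_on with
  | zero => simp
  | tmul v z => simp [Algebra.TensorProduct.tmul_mul_tmul, mul_assoc]
  | add u v hu hv => simp [mul_add, add_mul, hu, hv]

end Slice

section Legs

variable (K H : Type*) [CommSemiring K] [Semiring H] [Algebra K H]

def leg₁₃ : H ⊗[K] H →ₐ[K] (H ⊗[K] H) ⊗[K] H :=
  Algebra.TensorProduct.map Algebra.TensorProduct.includeLeft (AlgHom.id K H)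

def leg₂₃ : H ⊗[K] H →ₐ[K] (H ⊗[K] H) ⊗[K] H :=
  Algebra.TensorProduct.map Algebra.TensorProduct.includeRight (AlgHom.id K H)

variable {K H}

@[simp] lemma leg₁₃_tmul (x y : H) : leg₁₃ K H (x ⊗ₜ y) = (x ⊗ₜ 1) ⊗ₜ y := rfl

@[simp] lemma leg₂₃_tmul (x y : H) : leg₂₃ K H (x ⊗ₜ y) = (1 ⊗ₜ x) ⊗ₜ y := rfl

lemma commute_one_tmul_leg₁₃ (y : H) (w : H ⊗[K] H) :
    Commute (((1 : H) ⊗ₜ[K] y) ⊗ₜ[K] (1 : H)) (leg₁₃ K H w) := by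
  induction w using TensorProduct.induction_on with
  | zero => simp
  | tmul x z => simp [Commute, SemiconjBy, Algebra.TensorProduct.tmul_mul_tmul]
  | add u v hu hv => simpa using hu.add_right hv

lemma commute_leg₂₃_tmul_one (w : H ⊗[K] H) (x : H) :
    Commute (leg₂₃ K H w) ((x ⊗ₜ[K] (1 : H)) ⊗ₜ[K] (1 : H)) := by
  induction w using TensorProduct.induction_on with
  | zero => simp
  | tmul y z => simp [Commute, SemiconjBy, Algebra.TensorProduct.tmul_mul_tmul]
  | add u v hu hv => simpa using hu.add_left hv

lemma sliceLeft_leg₁₃_mul_leg₂₃ (φ ψ : H →ₗ[K] K) (u v : H ⊗[K] H) :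
    sliceLeft (LinearMap.mul' K K ∘ₗ TensorProduct.map φ ψ) (leg₁₃ K H u * leg₂₃ K H v) =
      sliceLeft φ u * sliceLeft ψ v := by
  induction u using TensorProduct.induction_on with
  | zero => simp
  | add u u' hu hu' => simp [add_mul, hu, hu']
  | tmul x y =>
    induction v using TensorProduct.induction_on with
    | zero => simp
    | add v v' hv hv' => rw [map_add, mul_add, map_add, hv, hv', map_add, mul_add]
    | tmul z w =>
      simp [Algebra.TensorProduct.tmul_mul_tmul, mul_comm (φ x), mul_smul]

lemma rTensor_mulLeft_comp_mulRight_comp {B : Type*} [Semiring B] [Algebra K B] (x y : B)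
    (f : H →ₗ[K] B) (w : H ⊗[K] H) :
    (LinearMap.mulLeft K x ∘ₗ LinearMap.mulRight K y ∘ₗ f).rTensor H w =
      (x ⊗ₜ[K] (1 : H)) * f.rTensor H w * (y ⊗ₜ[K] (1 : H)) := by
  induction w using TensorProduct.induction_on with
  | zero => simp
  | tmul u v => simp [Algebra.TensorProduct.tmul_mul_tmul, mul_assoc]
  | add u v hu hv => simp [mul_add, add_mul, hu, hv]

end Legs

local notation "Δ" => Coalgebra.comul (R := ℂ)
local notation "ε" => Coalgebra.counit (R := ℂ)
local notation "𝒮" => HopfAlgebra.antipode ℂ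
local notation "τ" => TensorProduct.comm ℂ _ _

section RMatrix

variable {H ι : Type*} [Semiring H] [HopfAlgebra ℂ H] [Fintype ι] (aR bR : ι → H)

def rMatrix : H ⊗[ℂ] H := ∑ i, aR i ⊗ₜ bR i

def monodromy : H ⊗[ℂ] H := rMatrix aR bR * τ (rMatrix aR bR)

lemma monodromy_eq_sum :
    monodromy aR bR = ∑ i, ∑ j, (aR i * bR j) ⊗ₜ[ℂ] (bR i * aR j) := by
  simp [monodromy, rMatrix, Finset.sum_mul_sum, Algebra.TensorProduct.tmul_mul_tmul]

lemma rTensor_comul_mul (u v : H ⊗[ℂ] H) :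
    LinearMap.rTensor H Δ (u * v) = LinearMap.rTensor H Δ u * LinearMap.rTensor H Δ v :=
  map_mul (Algebra.TensorProduct.map (Bialgebra.comulAlgHom ℂ H) (AlgHom.id ℂ H)) u v

variable {aR bR}

lemma sum_counit_bR_smul_aR (hRinv : IsUnit (rMatrix aR bR))
    (hR₂ : ∑ i, aR i ⊗ₜ[ℂ] Δ (bR i) = ∑ i, ∑ j, (aR i * aR j) ⊗ₜ[ℂ] (bR j ⊗ₜ[ℂ] bR i)) :
    ∑ i, ε (bR i) • aR i = 1 := by
  let c : H ⊗[ℂ] H →ₗ[ℂ] H := (TensorProduct.rid ℂ H).toLinearMap ∘ₗ counit.lTensor H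
  have hc : ∀ x y : H, c (x ⊗ₜ y) = ε y • x := by simp [c]
  have hcΔ : ∀ x : H, c (Δ x) = x := by simp [c]
  have h : ((∑ i, ε (bR i) • aR i) ⊗ₜ 1) * rMatrix aR bR = rMatrix aR bR := by
    have := congrArg (c.lTensor H) hR₂
    simp only [map_sum, LinearMap.lTensor_tmul, hc, hcΔ] at this
    rw [rMatrix, sum_tmul, Finset.sum_mul_sum, this]
    simp [Algebra.TensorProduct.tmul_mul_tmul, smul_tmul]
  have h1 : (∑ i, ε (bR i) • aR i) ⊗ₜ[ℂ] (1 : H) = 1 :=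
    hRinv.mul_right_cancel (h.trans (one_mul _).symm)
  simpa [hc, Algebra.TensorProduct.one_def] using congrArg c h1

lemma sum_counit_aR_smul_bR (hRinv : IsUnit (rMatrix aR bR))
    (hR₁ : ∑ i, Δ (aR i) ⊗ₜ[ℂ] bR i = ∑ i, ∑ j, (aR i ⊗ₜ[ℂ] aR j) ⊗ₜ[ℂ] (bR i * bR j)) :
    ∑ i, ε (aR i) • bR i = 1 := by
  let c : H ⊗[ℂ] H →ₗ[ℂ] H := (TensorProduct.lid ℂ H).toLinearMap ∘ₗ counit.rTensor H
  have hc : ∀ x y : H, c (x ⊗ₜ y) = ε x • y := by simp [c]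
  have hcΔ : ∀ x : H, c (Δ x) = x := by simp [c]
  have h : (1 ⊗ₜ (∑ i, ε (aR i) • bR i)) * rMatrix aR bR = rMatrix aR bR := by
    have := congrArg (c.rTensor H) hR₁
    simp only [map_sum, LinearMap.rTensor_tmul, hc, hcΔ] at this
    rw [rMatrix, tmul_sum, Finset.sum_mul_sum, this]
    simp [Algebra.TensorProduct.tmul_mul_tmul, smul_tmul']
  have h1 : (1 : H) ⊗ₜ[ℂ] (∑ i, ε (aR i) • bR i) = 1 :=
    hRinv.mul_right_cancel (h.trans (one_mul _).symm)
  simpa [hc, Algebra.TensorProduct.one_def] using congrArg c h1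

lemma sum_one_tmul_mul_comm_rMatrix_mul_antipode (hRinv : IsUnit (rMatrix aR bR))
    (hR₂ : ∑ i, aR i ⊗ₜ[ℂ] Δ (bR i) = ∑ i, ∑ j, (aR i * aR j) ⊗ₜ[ℂ] (bR j ⊗ₜ[ℂ] bR i)) :
    ∑ i, (1 ⊗ₜ aR i) * τ (rMatrix aR bR) * (𝒮 (bR i) ⊗ₜ 1) = (1 : H ⊗[ℂ] H) := by
  have h := congrArg ((LinearMap.mul' ℂ H ∘ₗ (𝒮).lTensor H).lTensor H) hR₂
  simp only [map_sum, LinearMap.lTensor_tmul, LinearMap.comp_apply,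
    HopfAlgebra.mul_antipode_lTensor_comul_apply, LinearMap.mul'_apply] at h
  calc ∑ i, (1 ⊗ₜ aR i) * τ (rMatrix aR bR) * (𝒮 (bR i) ⊗ₜ 1)
      = τ (∑ i, ∑ j, (aR i * aR j) ⊗ₜ[ℂ] (bR j * 𝒮 (bR i))) := by
        simp [rMatrix, Finset.mul_sum, Finset.sum_mul, Algebra.TensorProduct.tmul_mul_tmul]
    _ = τ ((∑ i, ε (bR i) • aR i) ⊗ₜ 1) := by
        simp [← h, sum_tmul, Algebra.algebraMap_eq_smul_one, smul_tmul]
    _ = 1 := by simp [sum_counit_bR_smul_aR hRinv hR₂, Algebra.TensorProduct.one_def]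

lemma commute_monodromy_comm_comul
    (hRΔ : ∀ x, rMatrix aR bR * Δ x = τ (Δ x) * rMatrix aR bR) (x : H) :
    Commute (monodromy aR bR) (τ (Δ x)) := by
  have hτ : ∀ u v : H ⊗[ℂ] H, τ (u * v) = τ u * τ v :=
    map_mul (Algebra.TensorProduct.comm ℂ H H)
  have h : τ (rMatrix aR bR) * τ (Δ x) = Δ x * τ (rMatrix aR bR) := by
    simpa [hτ] using congrArg τ (hRΔ x)
  rw [Commute, SemiconjBy, monodromy, mul_assoc, h, ← mul_assoc, hRΔ, mul_assoc]

lemma rTensor_comul_rMatrix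
    (hR₁ : ∑ i, Δ (aR i) ⊗ₜ[ℂ] bR i = ∑ i, ∑ j, (aR i ⊗ₜ[ℂ] aR j) ⊗ₜ[ℂ] (bR i * bR j)) :
    LinearMap.rTensor H Δ (rMatrix aR bR) =
      leg₁₃ ℂ H (rMatrix aR bR) * leg₂₃ ℂ H (rMatrix aR bR) := by
  simp [rMatrix, hR₁, Finset.sum_mul_sum, Algebra.TensorProduct.tmul_mul_tmul]

lemma rTensor_comul_comm_rMatrix
    (hR₂ : ∑ i, aR i ⊗ₜ[ℂ] Δ (bR i) = ∑ i, ∑ j, (aR i * aR j) ⊗ₜ[ℂ] (bR j ⊗ₜ[ℂ] bR i)) :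
    LinearMap.rTensor H Δ (τ (rMatrix aR bR)) =
      leg₂₃ ℂ H (τ (rMatrix aR bR)) * leg₁₃ ℂ H (τ (rMatrix aR bR)) := by
  have h := congrArg (TensorProduct.comm ℂ H (H ⊗[ℂ] H)) hR₂
  simp only [map_sum, comm_tmul] at h
  simp [rMatrix, h, Finset.sum_mul_sum, Algebra.TensorProduct.tmul_mul_tmul]

lemma leg₁₃_comm_rMatrix_mul
    (hR₁ : ∑ i, Δ (aR i) ⊗ₜ[ℂ] bR i = ∑ i, ∑ j, (aR i ⊗ₜ[ℂ] aR j) ⊗ₜ[ℂ] (bR i * bR j)) :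
    leg₁₃ ℂ H (τ (rMatrix aR bR)) * (τ (rMatrix aR bR) ⊗ₜ[ℂ] (1 : H)) =
      ∑ p, ((bR p ⊗ₜ[ℂ] (1 : H)) ⊗ₜ[ℂ] (1 : H)) * leg₂₃ ℂ H (τ (Δ (aR p))) := by
  let Φ : (H ⊗[ℂ] H) ⊗[ℂ] H →ₗ[ℂ] (H ⊗[ℂ] H) ⊗[ℂ] H :=
    TensorProduct.lift <| (LinearMap.mul ℂ _).flip.compl₁₂
      ((leg₂₃ ℂ H).toLinearMap ∘ₗ (TensorProduct.comm ℂ H H).toLinearMap)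
      ((Algebra.TensorProduct.includeLeft : H ⊗[ℂ] H →ₐ[ℂ] (H ⊗[ℂ] H) ⊗[ℂ] H).toLinearMap ∘ₗ
        (TensorProduct.mk ℂ H H).flip 1)
  have hΦ : ∀ t z, Φ (t ⊗ₜ z) = ((z ⊗ₜ[ℂ] (1 : H)) ⊗ₜ[ℂ] (1 : H)) * leg₂₃ ℂ H (τ t) :=
    fun _ _ => rfl
  have h := congrArg Φ hR₁
  simp only [map_sum, hΦ] at h
  rw [h]
  simp [rMatrix, sum_tmul, Finset.sum_mul_sum, Algebra.TensorProduct.tmul_mul_tmul]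

lemma commute_leg₂₃_monodromy
    (hRΔ : ∀ x, rMatrix aR bR * Δ x = τ (Δ x) * rMatrix aR bR)
    (hR₁ : ∑ i, Δ (aR i) ⊗ₜ[ℂ] bR i = ∑ i, ∑ j, (aR i ⊗ₜ[ℂ] aR j) ⊗ₜ[ℂ] (bR i * bR j)) :
    Commute (leg₂₃ ℂ H (monodromy aR bR))
      (leg₁₃ ℂ H (τ (rMatrix aR bR)) * (τ (rMatrix aR bR) ⊗ₜ[ℂ] (1 : H))) := by
  rw [leg₁₃_comm_rMatrix_mul hR₁]
  exact Commute.sum_right _ _ _ fun p _ =>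
    (commute_leg₂₃_tmul_one _ _).mul_right
      ((commute_monodromy_comm_comul hRΔ (aR p)).map (leg₂₃ ℂ H))

variable (aR bR) in
def twistedComul : H →ₗ[ℂ] H ⊗[ℂ] H :=
  ∑ i, LinearMap.mulLeft ℂ (1 ⊗ₜ aR i) ∘ₗ
    LinearMap.mulRight ℂ (τ (rMatrix aR bR) * (𝒮 (bR i) ⊗ₜ 1)) ∘ₗ Δ

theorem rTensor_twistedComul_monodromy (hRinv : IsUnit (rMatrix aR bR))
    (hRΔ : ∀ x, rMatrix aR bR * Δ x = τ (Δ x) * rMatrix aR bR)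
    (hR₁ : ∑ i, Δ (aR i) ⊗ₜ[ℂ] bR i = ∑ i, ∑ j, (aR i ⊗ₜ[ℂ] aR j) ⊗ₜ[ℂ] (bR i * bR j))
    (hR₂ : ∑ i, aR i ⊗ₜ[ℂ] Δ (bR i) = ∑ i, ∑ j, (aR i * aR j) ⊗ₜ[ℂ] (bR j ⊗ₜ[ℂ] bR i)) :
    LinearMap.rTensor H (twistedComul aR bR) (monodromy aR bR) =
      leg₁₃ ℂ H (monodromy aR bR) * leg₂₃ ℂ H (monodromy aR bR) := by
  let R13 := leg₁₃ ℂ H (rMatrix aR bR)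
  let R31 := leg₁₃ ℂ H (τ (rMatrix aR bR))
  let M23 := leg₂₃ ℂ H (monodromy aR bR)
  let a₂ : ι → (H ⊗[ℂ] H) ⊗[ℂ] H := fun i => ((1 : H) ⊗ₜ[ℂ] aR i) ⊗ₜ[ℂ] (1 : H)
  let R21 : (H ⊗[ℂ] H) ⊗[ℂ] H := τ (rMatrix aR bR) ⊗ₜ[ℂ] (1 : H)
  let Sb₁ : ι → (H ⊗[ℂ] H) ⊗[ℂ] H := fun i => (𝒮 (bR i) ⊗ₜ[ℂ] (1 : H)) ⊗ₜ[ℂ] (1 : H)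
  have hΔM : LinearMap.rTensor H Δ (monodromy aR bR) = R13 * M23 * R31 := by
    rw [monodromy, rTensor_comul_mul, rTensor_comul_rMatrix hR₁, rTensor_comul_comm_rMatrix hR₂,
      mul_assoc R13, ← mul_assoc (leg₂₃ ℂ H _), ← map_mul]
    simp only [R13, M23, R31, monodromy, mul_assoc]
  have ha₂R13 : ∀ i, Commute (a₂ i) R13 := fun i => commute_one_tmul_leg₁₃ _ _
  have ha₂R31 : ∀ i, Commute (a₂ i) R31 := fun i => commute_one_tmul_leg₁₃ _ _
  have hM23 : Commute M23 (R31 * R21) := commute_leg₂₃_monodromy hRΔ hR₁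
  have hM23Sb₁ : ∀ i, Commute M23 (Sb₁ i) := fun i => commute_leg₂₃_tmul_one _ _
  have hcollapse : ∑ i, a₂ i * (R21 * Sb₁ i) = 1 := by
    have h := congrArg (· ⊗ₜ[ℂ] (1 : H)) (sum_one_tmul_mul_comm_rMatrix_mul_antipode hRinv hR₂)
    simpa [a₂, R21, Sb₁, sum_tmul, Algebra.TensorProduct.tmul_mul_tmul, mul_assoc,
      Algebra.TensorProduct.one_def] using h
  calc LinearMap.rTensor H (twistedComul aR bR) (monodromy aR bR)
      = ∑ i, a₂ i * (R13 * M23 * R31) * (R21 * Sb₁ i) := by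
        simp only [twistedComul, ← LinearMap.coe_rTensorHom, map_sum, LinearMap.sum_apply]
        simp only [LinearMap.coe_rTensorHom, rTensor_mulLeft_comp_mulRight_comp, hΔM]
        refine Finset.sum_congr rfl fun i _ => ?_
        simp only [a₂, R21, Sb₁, Algebra.TensorProduct.tmul_mul_tmul, mul_one]
    _ = ∑ i, R13 * (R31 * (a₂ i * (R21 * Sb₁ i) * M23)) := by
        refine Finset.sum_congr rfl fun i _ => ?_
        simp only [mul_assoc]
        rw [(ha₂R13 i).left_comm, ← mul_assoc R31, hM23.left_comm, (hM23Sb₁ i).eq, mul_assoc R31,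
          (ha₂R31 i).left_comm]
    _ = leg₁₃ ℂ H (monodromy aR bR) * M23 := by
        rw [← Finset.mul_sum, ← Finset.mul_sum, ← Finset.sum_mul, hcollapse, one_mul, ← mul_assoc,
          monodromy, map_mul]

lemma includeRight_convMul_includeLeft (x : H) :
    (toConv (Algebra.TensorProduct.includeRight : H →ₐ[ℂ] H ⊗[ℂ] H).toLinearMap *
      toConv (Algebra.TensorProduct.includeLeft : H →ₐ[ℂ] H ⊗[ℂ] H).toLinearMap) x = τ (Δ x) := by
  rw [LinearMap.convMul_apply]
  induction Δ x using TensorProduct.induction_on with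
  | zero => simp
  | tmul y z => simp [Algebra.TensorProduct.tmul_mul_tmul]
  | add u v hu hv => simp_all [map_add]

theorem sum_conj_monodromy_right_eq_left
    (hRΔ : ∀ x, rMatrix aR bR * Δ x = τ (Δ x) * rMatrix aR bR)
    {h : H} {κ : Type*} (r : Coalgebra.Repr ℂ h κ) :
    ∑ k ∈ r.index, (1 ⊗ₜ 𝒮 (r.left k)) * monodromy aR bR * (1 ⊗ₜ r.right k) =
      ∑ k ∈ r.index, (r.left k ⊗ₜ 1) * monodromy aR bR * (𝒮 (r.right k) ⊗ₜ 1) := by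
  have h := congrArg (fun f => f.ofConv h) <|
    convMul_mulRight_antipode_eq Algebra.TensorProduct.includeLeft
      Algebra.TensorProduct.includeRight (monodromy aR bR) fun x => by
        rw [includeRight_convMul_includeLeft]
        exact commute_monodromy_comm_comul hRΔ x
  simpa [r.convMul_apply] using h

end RMatrix

section Psi

variable {H ι : Type} [Ring H] [HopfAlgebra ℂ H] [Fintype ι] {aR bR : ι → H}

variable (aR bR) in
lemma PsiMap_eq_sliceLeft (β : Module.Dual ℂ H) :
    PsiMap aR bR β = sliceLeft β (monodromy aR bR) := by
  simp [PsiMap, monodromy_eq_sum, map_sum]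

variable (aR bR) in
lemma starProd_eq_comp_twistedComul (φ ψ : Module.Dual ℂ H) :
    starProd aR bR φ ψ =
      (LinearMap.mul' ℂ ℂ ∘ₗ TensorProduct.map φ ψ) ∘ₗ twistedComul aR bR := by
  ext x
  simp only [starProd, conv, twistedComul, LinearMap.sum_apply, LinearMap.comp_apply, map_sum]
  refine Finset.sum_congr rfl fun i _ => ?_
  induction Δ x using TensorProduct.induction_on with
  | zero => simp
  | tmul y z =>
    simp [rMatrix, Finset.mul_sum, Finset.sum_mul, Algebra.TensorProduct.tmul_mul_tmul, mul_assoc]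
  | add u v hu hv => simp_all [map_add, Finset.sum_add_distrib]

theorem PsiMap_starProd (hRinv : IsUnit (rMatrix aR bR))
    (hRΔ : ∀ x, rMatrix aR bR * Δ x = τ (Δ x) * rMatrix aR bR)
    (hR₁ : ∑ i, Δ (aR i) ⊗ₜ[ℂ] bR i = ∑ i, ∑ j, (aR i ⊗ₜ[ℂ] aR j) ⊗ₜ[ℂ] (bR i * bR j))
    (hR₂ : ∑ i, aR i ⊗ₜ[ℂ] Δ (bR i) = ∑ i, ∑ j, (aR i * aR j) ⊗ₜ[ℂ] (bR j ⊗ₜ[ℂ] bR i))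
    (φ ψ : Module.Dual ℂ H) :
    PsiMap aR bR (starProd aR bR φ ψ) = PsiMap aR bR φ * PsiMap aR bR ψ := by
  rw [PsiMap_eq_sliceLeft, starProd_eq_comp_twistedComul, sliceLeft_comp,
    rTensor_twistedComul_monodromy hRinv hRΔ hR₁ hR₂, sliceLeft_leg₁₃_mul_leg₂₃,
    PsiMap_eq_sliceLeft, PsiMap_eq_sliceLeft]

theorem PsiMap_counit (hRinv : IsUnit (rMatrix aR bR))
    (hR₁ : ∑ i, Δ (aR i) ⊗ₜ[ℂ] bR i = ∑ i, ∑ j, (aR i ⊗ₜ[ℂ] aR j) ⊗ₜ[ℂ] (bR i * bR j))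
    (hR₂ : ∑ i, aR i ⊗ₜ[ℂ] Δ (bR i) = ∑ i, ∑ j, (aR i * aR j) ⊗ₜ[ℂ] (bR j ⊗ₜ[ℂ] bR i)) :
    PsiMap aR bR ε = 1 :=
  calc PsiMap aR bR ε = (∑ i, ε (aR i) • bR i) * ∑ j, ε (bR j) • aR j := by
        simp only [PsiMap, Finset.sum_mul_sum, Bialgebra.counit_mul, smul_mul_smul_comm]
    _ = 1 := by rw [sum_counit_aR_smul_bR hRinv hR₁, sum_counit_bR_smul_aR hRinv hR₂, one_mul]

theorem PsiMap_sum_comp_mulLeft_mulRight_antipode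
    (hRΔ : ∀ x, rMatrix aR bR * Δ x = τ (Δ x) * rMatrix aR bR)
    {h : H} {κ : Type*} (r : Coalgebra.Repr ℂ h κ) (φ : Module.Dual ℂ H) :
    PsiMap aR bR (∑ k ∈ r.index,
        φ ∘ₗ LinearMap.mulLeft ℂ (r.left k) ∘ₗ LinearMap.mulRight ℂ (𝒮 (r.right k))) =
      ∑ k ∈ r.index, 𝒮 (r.left k) * PsiMap aR bR φ * r.right k := by
  simp only [PsiMap_eq_sliceLeft, sliceLeft_sum, sliceLeft_comp_mulLeft_mulRight,
    mul_sliceLeft_mul, ← map_sum, sum_conj_monodromy_right_eq_left hRΔ r]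

end Psi

end LoopAlgebra

open LoopAlgebra

theorem loop_algebra_iso_general
    {H : Type} [Ring H] [HopfAlgebra ℂ H]
    -- an invertible R-matrix `R = Σᵢ aᵢ ⊗ bᵢ`
    {ι : Type} [Fintype ι] (aR bR : ι → H)
    (hRinv : IsUnit (∑ i, aR i ⊗ₜ[ℂ] bR i : H ⊗[ℂ] H))
    (hRΔ : ∀ x : H,
      (∑ i, aR i ⊗ₜ[ℂ] bR i) * Coalgebra.comul (R := ℂ) x
        = (TensorProduct.comm ℂ H H) (Coalgebra.comul (R := ℂ) x)
            * ∑ i, aR i ⊗ₜ[ℂ] bR i)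
    (hR₁ : (∑ i, (Coalgebra.comul (R := ℂ) (aR i)) ⊗ₜ[ℂ] bR i)
        = ∑ i, ∑ j, (aR i ⊗ₜ[ℂ] aR j) ⊗ₜ[ℂ] (bR i * bR j))
    (hR₂ : (∑ i, aR i ⊗ₜ[ℂ] (Coalgebra.comul (R := ℂ) (bR i)))
        = ∑ i, ∑ j, (aR i * aR j) ⊗ₜ[ℂ] (bR j ⊗ₜ[ℂ] bR i))
    -- factorizability: `Ψ` is bijective
    (hfact : Function.Bijective (PsiMap aR bR)) :
    -- `Ψ(φ ∗ ψ) = Ψ(φ)·Ψ(ψ)`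
    (∀ φ ψ : Module.Dual ℂ H,
      PsiMap aR bR (starProd aR bR φ ψ) = PsiMap aR bR φ * PsiMap aR bR ψ)
    -- `Ψ(ε) = 1`
    ∧ PsiMap aR bR (Coalgebra.counit (R := ℂ)) = 1
    -- `Ψ` intertwines the actions: `Ψ(φ(h' ? S(h''))) = S(h') Ψ(φ) h''`
    -- (stated for any finite Sweedler decomposition `Δ(h) = Σ_k h1ₖ ⊗ h2ₖ`)
    ∧ (∀ (h : H) (n : ℕ) (h1 h2 : Fin n → H),
        Coalgebra.comul (R := ℂ) h = ∑ k, h1 k ⊗ₜ[ℂ] h2 k →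
        ∀ φ : Module.Dual ℂ H,
          PsiMap aR bR (∑ k, φ ∘ₗ LinearMap.mulLeft ℂ (h1 k)
              ∘ₗ LinearMap.mulRight ℂ (HopfAlgebra.antipode (R := ℂ) (h2 k)))
            = ∑ k, HopfAlgebra.antipode (R := ℂ) (h1 k) * PsiMap aR bR φ * h2 k)
    -- `(H*, ∗, ε)` is an associative unital algebra
    ∧ (∀ φ ψ χ : Module.Dual ℂ H,
        starProd aR bR (starProd aR bR φ ψ) χ = starProd aR bR φ (starProd aR bR ψ χ))
    ∧ (∀ φ : Module.Dual ℂ H,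
        starProd aR bR (Coalgebra.counit (R := ℂ)) φ = φ
          ∧ starProd aR bR φ (Coalgebra.counit (R := ℂ)) = φ)
    -- and `Ψ` is an algebra isomorphism onto `H`
    ∧ Function.Bijective (PsiMap aR bR) := by
  have hmul := PsiMap_starProd hRinv hRΔ hR₁ hR₂
  have hone := PsiMap_counit hRinv hR₁ hR₂
  refine ⟨hmul, hone, fun h n h1 h2 hΔ φ => ?_, fun φ ψ χ => hfact.injective ?_,
    fun φ => ⟨hfact.injective ?_, hfact.injective ?_⟩, hfact⟩
  · exact PsiMap_sum_comp_mulLeft_mulRight_antipode hRΔ ⟨Finset.univ, h1, h2, hΔ.symm⟩ φ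
  · rw [hmul, hmul, hmul, hmul, mul_assoc]
  · rw [hmul, hone, one_mul]
  · rw [hmul, hone, mul_one]

theorem loop_algebra_iso
    {H : Type} [Ring H] [HopfAlgebra ℂ H] [FiniteDimensional ℂ H]
    -- the antipode is invertible
    (Sinv : H →ₗ[ℂ] H)
    (hSinv₁ : ∀ x : H, Sinv (HopfAlgebra.antipode (R := ℂ) x) = x)
    (hSinv₂ : ∀ x : H, HopfAlgebra.antipode (R := ℂ) (Sinv x) = x)
    -- an invertible R-matrix `R = Σᵢ aᵢ ⊗ bᵢ`
    {ι : Type} [Fintype ι] (aR bR : ι → H)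
    (hRinv : IsUnit (∑ i, aR i ⊗ₜ[ℂ] bR i : H ⊗[ℂ] H))
    (hRΔ : ∀ x : H,
      (∑ i, aR i ⊗ₜ[ℂ] bR i) * Coalgebra.comul (R := ℂ) x
        = (TensorProduct.comm ℂ H H) (Coalgebra.comul (R := ℂ) x)
            * ∑ i, aR i ⊗ₜ[ℂ] bR i)
    (hR₁ : (∑ i, (Coalgebra.comul (R := ℂ) (aR i)) ⊗ₜ[ℂ] bR i)
        = ∑ i, ∑ j, (aR i ⊗ₜ[ℂ] aR j) ⊗ₜ[ℂ] (bR i * bR j))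
    (hR₂ : (∑ i, aR i ⊗ₜ[ℂ] (Coalgebra.comul (R := ℂ) (bR i)))
        = ∑ i, ∑ j, (aR i * aR j) ⊗ₜ[ℂ] (bR j ⊗ₜ[ℂ] bR i))
    -- factorizability: `Ψ` is bijective
    (hfact : Function.Bijective (PsiMap aR bR)) :
    -- `Ψ(φ ∗ ψ) = Ψ(φ)·Ψ(ψ)`
    (∀ φ ψ : Module.Dual ℂ H,
      PsiMap aR bR (starProd aR bR φ ψ) = PsiMap aR bR φ * PsiMap aR bR ψ)
    -- `Ψ(ε) = 1`
    ∧ PsiMap aR bR (Coalgebra.counit (R := ℂ)) = 1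
    -- `Ψ` intertwines the actions: `Ψ(φ(h' ? S(h''))) = S(h') Ψ(φ) h''`
    -- (stated for any finite Sweedler decomposition `Δ(h) = Σ_k h1ₖ ⊗ h2ₖ`)
    ∧ (∀ (h : H) (n : ℕ) (h1 h2 : Fin n → H),
        Coalgebra.comul (R := ℂ) h = ∑ k, h1 k ⊗ₜ[ℂ] h2 k →
        ∀ φ : Module.Dual ℂ H,
          PsiMap aR bR (∑ k, φ ∘ₗ LinearMap.mulLeft ℂ (h1 k)
              ∘ₗ LinearMap.mulRight ℂ (HopfAlgebra.antipode (R := ℂ) (h2 k)))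
            = ∑ k, HopfAlgebra.antipode (R := ℂ) (h1 k) * PsiMap aR bR φ * h2 k)
    -- `(H*, ∗, ε)` is an associative unital algebra
    ∧ (∀ φ ψ χ : Module.Dual ℂ H,
        starProd aR bR (starProd aR bR φ ψ) χ = starProd aR bR φ (starProd aR bR ψ χ))
    ∧ (∀ φ : Module.Dual ℂ H,
        starProd aR bR (Coalgebra.counit (R := ℂ)) φ = φ
          ∧ starProd aR bR φ (Coalgebra.counit (R := ℂ)) = φ)
    -- and `Ψ` is an algebra isomorphism onto `H`
    ∧ Function.Bijective (PsiMap aR bR) :=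
  loop_algebra_iso_general aR bR hRinv hRΔ hR₁ hR₂ hfact

end
end

section
/- The map Π_A from the vector space of traces on Proj_A to SLF(A), defined by Π_A(t)(a) = t_A(ρ_a), is a linear isomorphism; in particular, a trace on the finite-dimensional projective A-modules is uniquely determined by its component on the left regular module, and every symmetric linear form on A arises from a unique trace. -/
/- STATEMENT 12: the map `Π_A`, sending a trace `t` on the finite-dimensional projective
`A`-modules to the symmetric linear form `a ↦ t_A(ρ_a)`, is a linear isomorphism onto
`SLF(A)`. -/

noncomputable section

/-- Symmetric linear forms on `A`. -/
def IsSLFk (k : Type) {A : Type} [Field k] [Ring A] [Algebra k A] (φ : A → k) : Prop :=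
  ∀ a b : A, φ (a * b) = φ (b * a)

/-- A family of `k`-linear maps `t_W : End_A(W) →ₗ[k] k`, indexed by the
finite-dimensional projective (left) `A`-modules `W`. -/
def TraceFun (k A : Type) [Field k] [Ring A] [Algebra k A] : Type 1 :=
  ∀ (W : Type) [AddCommGroup W] [Module k W] [Module A W] [IsScalarTower k A W]
    [SMulCommClass k A W] [SMulCommClass A k W] [Module.Finite k W]
    [Module.Projective A W], (W →ₗ[A] W) →ₗ[k] k

/-- The trace property: `t_V(f ∘ g) = t_U(g ∘ f)` for all `f : U → V`, `g : V → U`. -/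
def IsTrace {k A : Type} [Field k] [Ring A] [Algebra k A] (t : TraceFun k A) : Prop :=
  ∀ (W₁ : Type) [AddCommGroup W₁] [Module k W₁] [Module A W₁] [IsScalarTower k A W₁]
    [SMulCommClass k A W₁] [SMulCommClass A k W₁] [Module.Finite k W₁]
    [Module.Projective A W₁],
  ∀ (W₂ : Type) [AddCommGroup W₂] [Module k W₂] [Module A W₂] [IsScalarTower k A W₂]
    [SMulCommClass k A W₂] [SMulCommClass A k W₂] [Module.Finite k W₂]
    [Module.Projective A W₂],
  ∀ (f : W₁ →ₗ[A] W₂) (g : W₂ →ₗ[A] W₁), t W₂ (f ∘ₗ g) = t W₁ (g ∘ₗ f)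

instance (priority := 500) SMulCommClass.algebraSelf {k A : Type} [CommSemiring k]
    [Semiring A] [Algebra k A] : SMulCommClass A k A :=
  SMulCommClass.symm k A A

/-- `Π_A(t)(a) = t_A(ρ_a)`, where `ρ_a` is right multiplication by `a` on the left
regular module. -/
def PiMap {k A : Type} [Field k] [Ring A] [Algebra k A] [FiniteDimensional k A]
    (t : TraceFun k A) : A → k :=
  fun a => t A (LinearMap.toSpanSingleton A A a)

/-
A finitely generated projective module `W` has a finite dual basis `(wᵢ, pᵢ)`, with
`x = ∑ pᵢ(x) • wᵢ`, so every endomorphism `h` of `W` is a sum `∑ wᵢ ∘ (pᵢ ∘ h)` of maps factoring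
through the regular module. The trace property then forces `t_W(h) = ∑ t_A(ρ_{pᵢ(h wᵢ)})`, so `t`
is determined by `Π_A(t)`. Conversely, for a symmetric form `φ` the sum `∑ φ(pᵢ(h wᵢ))` takes the
same value on `f ∘ g` and on `g ∘ f`: expanding both in the two dual bases gives the same double
sum up to `φ(ab) = φ(ba)`. Taking `f = id` shows that it does not depend on the dual basis, and
the dual basis `(1, id)` of `A` shows that it extends `φ`.
-/

theorem LinearMap.toSpanSingleton_mul {A : Type*} [Semiring A] (a b : A) :
    LinearMap.toSpanSingleton A A (a * b) =
      LinearMap.toSpanSingleton A A b ∘ₗ LinearMap.toSpanSingleton A A a := by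
  ext
  simp

structure FiniteDualBasis (A W : Type*) [Semiring A] [AddCommMonoid W] [Module A W] where
  n : ℕ
  vec : Fin n → W
  coord : Fin n → W →ₗ[A] A
  sum_coord_smul_vec : ∀ x, ∑ i, coord i x • vec i = x

namespace FiniteDualBasis

section

variable {A W : Type*} [Semiring A] [AddCommMonoid W] [Module A W]

theorem nonempty [Module.Finite A W] [Module.Projective A W] :
    Nonempty (FiniteDualBasis A W) := by
  obtain ⟨n, f, g, -, -, hfg⟩ := Module.Finite.exists_comp_eq_id_of_projective A W
  refine ⟨⟨n, fun i => f (fun j => if i = j then 1 else 0), fun i => LinearMap.proj i ∘ₗ g,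
    fun x => ?_⟩⟩
  have hx : f (g x) = x := congr($hfg x)
  simpa [hx] using (LinearMap.pi_apply_eq_sum_univ f (g x)).symm

def self (A : Type*) [Semiring A] : FiniteDualBasis A A :=
  ⟨1, fun _ => 1, fun _ => LinearMap.id, fun x => by simp⟩

theorem sum_toSpanSingleton_comp (b : FiniteDualBasis A W) (h : W →ₗ[A] W) :
    ∑ i, LinearMap.toSpanSingleton A W (b.vec i) ∘ₗ (b.coord i ∘ₗ h) = h := by
  ext x
  simp [b.sum_coord_smul_vec]

def traceSum {M : Type*} [AddCommMonoid M] (b : FiniteDualBasis A W) (φ : A → M)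
    (h : W →ₗ[A] W) : M :=
  ∑ i, φ (b.coord i (h (b.vec i)))

theorem traceSum_self_toSpanSingleton {M : Type*} [AddCommMonoid M] (φ : A → M) (a : A) :
    (self A).traceSum φ (LinearMap.toSpanSingleton A A a) = φ a :=
  (Fin.sum_univ_one _).trans (by simp [self])

end

variable {k A : Type} [Field k] [Ring A] [Algebra k A]

theorem traceSum_comp_comm (φ : Module.Dual k A) (hφ : IsSLFk k φ)
    {W₁ W₂ : Type*} [AddCommMonoid W₁] [Module A W₁] [AddCommMonoid W₂] [Module A W₂]
    (b₁ : FiniteDualBasis A W₁) (b₂ : FiniteDualBasis A W₂)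
    (f : W₁ →ₗ[A] W₂) (g : W₂ →ₗ[A] W₁) :
    b₂.traceSum φ (f ∘ₗ g) = b₁.traceSum φ (g ∘ₗ f) := by
  have expand₂ : ∀ i, b₂.coord i (f (g (b₂.vec i))) =
      ∑ j, b₁.coord j (g (b₂.vec i)) * b₂.coord i (f (b₁.vec j)) := fun i => by
    conv_lhs => rw [← b₁.sum_coord_smul_vec (g (b₂.vec i))]
    simp
  have expand₁ : ∀ j, b₁.coord j (g (f (b₁.vec j))) =
      ∑ i, b₂.coord i (f (b₁.vec j)) * b₁.coord j (g (b₂.vec i)) := fun j => by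
    conv_lhs => rw [← b₂.sum_coord_smul_vec (f (b₁.vec j))]
    simp
  simp only [traceSum, LinearMap.comp_apply, expand₁, expand₂, map_sum]
  rw [Finset.sum_comm]
  exact Finset.sum_congr rfl fun j _ => Finset.sum_congr rfl fun i _ => hφ _ _

theorem traceSum_eq_of_isSLFk (φ : Module.Dual k A) (hφ : IsSLFk k φ)
    {W : Type*} [AddCommMonoid W] [Module A W] (b b' : FiniteDualBasis A W) (h : W →ₗ[A] W) :
    b.traceSum φ h = b'.traceSum φ h := by
  simpa using b'.traceSum_comp_comm φ hφ b LinearMap.id h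

def traceForm {W : Type*} [AddCommMonoid W] [Module k W] [Module A W]
    [IsScalarTower k A W] [SMulCommClass A k W] (b : FiniteDualBasis A W)
    (φ : Module.Dual k A) : (W →ₗ[A] W) →ₗ[k] k where
  toFun := b.traceSum φ
  map_add' f g := by simp [traceSum, Finset.sum_add_distrib]
  map_smul' c f := by
    simp only [traceSum, LinearMap.smul_apply, RingHom.id_apply, Finset.smul_sum]
    refine Finset.sum_congr rfl fun i _ => ?_
    rw [← algebraMap_smul A c, map_smul, algebraMap_smul, map_smul]

end FiniteDualBasis

section Traces

variable {k A : Type} [Field k] [Ring A] [Algebra k A]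

def traceOf (φ : Module.Dual k A) : TraceFun k A := fun W _ _ _ _ _ _ _ _ =>
  have : Module.Finite A W := Module.Finite.of_restrictScalars_finite k A W
  (Classical.choice FiniteDualBasis.nonempty : FiniteDualBasis A W).traceForm φ

theorem isTrace_traceOf (φ : Module.Dual k A) (hφ : IsSLFk k φ) : IsTrace (traceOf φ) :=
  fun _ _ _ _ _ _ _ _ _ _ _ _ _ _ _ _ _ _ f g => FiniteDualBasis.traceSum_comp_comm φ hφ _ _ f g

variable [FiniteDimensional k A]

theorem piMap_traceOf (φ : Module.Dual k A) (hφ : IsSLFk k φ) : PiMap (traceOf φ) = φ := by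
  funext a
  exact (FiniteDualBasis.traceSum_eq_of_isSLFk φ hφ _ _ _).trans
    (FiniteDualBasis.traceSum_self_toSpanSingleton φ a)

theorem piMap_add (t : TraceFun k A) (a b : A) : PiMap t (a + b) = PiMap t a + PiMap t b := by
  simp [PiMap, LinearMap.toSpanSingleton_add]

theorem piMap_smul (t : TraceFun k A) (c : k) (a : A) : PiMap t (c • a) = c * PiMap t a := by
  simp [PiMap, LinearMap.toSpanSingleton_smul]

theorem IsTrace.isSLFk_piMap {t : TraceFun k A} (ht : IsTrace t) : IsSLFk k (PiMap t) := by
  intro a b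
  simp only [PiMap, LinearMap.toSpanSingleton_mul]
  exact ht A A _ _

theorem IsTrace.apply_eq_traceSum {t : TraceFun k A} (ht : IsTrace t)
    (W : Type) [AddCommGroup W] [Module k W] [Module A W] [IsScalarTower k A W]
    [SMulCommClass k A W] [SMulCommClass A k W] [Module.Finite k W] [Module.Projective A W]
    (b : FiniteDualBasis A W) (h : W →ₗ[A] W) :
    t W h = b.traceSum (PiMap t) h := by
  conv_lhs => rw [← b.sum_toSpanSingleton_comp h, map_sum]
  refine Finset.sum_congr rfl fun i _ => ?_
  rw [ht A W, LinearMap.comp_assoc, LinearMap.comp_toSpanSingleton,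
    LinearMap.comp_toSpanSingleton]
  rfl

theorem IsTrace.ext {t t' : TraceFun k A} (ht : IsTrace t) (ht' : IsTrace t')
    (h : PiMap t = PiMap t') : t = t' := by
  funext W _ _ _ _ _ _ _ _
  have : Module.Finite A W := Module.Finite.of_restrictScalars_finite k A W
  obtain ⟨b⟩ := FiniteDualBasis.nonempty (A := A) (W := W)
  ext e
  rw [ht.apply_eq_traceSum W b, ht'.apply_eq_traceSum W b, h]

end Traces

theorem traces_correspond_to_symmetric_forms
    (k A : Type) [Field k] [Ring A] [Algebra k A] [FiniteDimensional k A] :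
    -- `Π_A(t)` is a symmetric linear form
    (∀ t : TraceFun k A, IsTrace t → IsSLFk k (PiMap t))
    ∧ (∀ (t : TraceFun k A), IsTrace t → ∀ a b : A, PiMap t (a + b) = PiMap t a + PiMap t b)
    ∧ (∀ (t : TraceFun k A), IsTrace t → ∀ (c : k) (a : A), PiMap t (c • a) = c * PiMap t a)
    -- `Π_A` is linear
    ∧ (∀ (t t' : TraceFun k A), IsTrace t → IsTrace t' → ∀ (c : k) (a : A),
        PiMap (fun W _ _ _ _ _ _ _ _ => t W + c • t' W) a = PiMap t a + c * PiMap t' a)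
    -- `Π_A` is injective: a trace is determined by its component on the regular module
    ∧ (∀ t t' : TraceFun k A, IsTrace t → IsTrace t' → PiMap t = PiMap t' → t = t')
    -- `Π_A` is surjective onto `SLF(A)`
    ∧ (∀ φ : Module.Dual k A, IsSLFk k φ →
        ∃ t : TraceFun k A, IsTrace t ∧ PiMap t = φ) := by
  refine ⟨fun t ht => ht.isSLFk_piMap, fun t _ => piMap_add t, fun t _ => piMap_smul t,
    fun t t' _ _ c a => ?_, fun t t' ht ht' => ht.ext ht',
    fun φ hφ => ⟨traceOf φ, isTrace_traceOf φ hφ, piMap_traceOf φ hφ⟩⟩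
  simp [PiMap]

end
end
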